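/- arXiv:2109.00464 — 2 statements merged into one kernel-verified Lean document; each statement's English description precedes it below -/
import Mathlib

section
/- Let a < b be real numbers and let x₁ ∈ (a, b). Then there exist a constant M > 0 and a sequence (f_n) of functions in 𝓕₀, each with mode x₁, such that 0 ≤ f_n(y) ≤ M for all n and all y ∈ ℝ, the support of every f_n is contained in a common bounded interval, and f_n(y) converges as n → ∞ to (b − a)⁻¹·𝟙{y ∈ [a, b]} for Lebesgue almost every y ∈ ℝ. -/
open MeasureTheory Set Filter

/-- `f` belongs to `𝓕₀` with mode `x₀`: continuous, nonnegative, integrates to 1,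
nondecreasing on `(-∞, x₀]`, nonincreasing on `[x₀, ∞)`, and `x₀` is the unique
local (hence global) maximum. -/
def IsUnimodalDensity (f : ℝ → ℝ) (x₀ : ℝ) : Prop :=
  Continuous f ∧ (∀ y, 0 ≤ f y) ∧ (∫ y : ℝ, f y) = 1 ∧
    MonotoneOn f (Set.Iic x₀) ∧ AntitoneOn f (Set.Ici x₀) ∧
    ∀ x, x ≠ x₀ → f x < f x₀

/-- `f` belongs to the class `𝓕₀` of strictly unimodal distributions with
continuous Lebesgue density. -/
def MemF0 (f : ℝ → ℝ) : Prop := ∃ x₀, IsUnimodalDensity f x₀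

/-- `s` is a strictly `𝓕₀`-consistent scoring function for the mode. -/
def StrictlyF0Consistent (s : ℝ × ℝ → ℝ) : Prop :=
  Measurable s ∧
  (∀ x : ℝ, ∀ f : ℝ → ℝ, MemF0 f → Integrable (fun y => |s (x, y)| * f y)) ∧
  (∀ f : ℝ → ℝ, ∀ t : ℝ, IsUnimodalDensity f t → ∀ x : ℝ,
    (∫ y : ℝ, s (t, y) * f y) ≤ (∫ y : ℝ, s (x, y) * f y) ∧
    ((∫ y : ℝ, s (t, y) * f y) = (∫ y : ℝ, s (x, y) * f y) → x = t))

/-- `v` is a strict `𝓕₀`-identification function for the mode. -/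
def StrictF0Identification (v : ℝ × ℝ → ℝ) : Prop :=
  Measurable v ∧
  (∀ x : ℝ, ∀ f : ℝ → ℝ, MemF0 f → Integrable (fun y => |v (x, y)| * f y)) ∧
  (∀ f : ℝ → ℝ, ∀ t : ℝ, IsUnimodalDensity f t → ∀ x : ℝ,
    (∫ y : ℝ, v (x, y) * f y) = 0 ↔ x = t)

/-!
Take `g_k = T_k + k⁻¹ Λ`, where `T_k` is the trapezoid equal to `1` on `[a, b]` with slopes `±k`
and `Λ` is the unit tent at `x₁`. Since `x₁ ∈ [a, b]`, `T_k` rises up to `x₁` and falls after it,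
and the tent makes `x₁` a strict peak. All `g_k` lie between `𝟙[a, b]` and `2 · 𝟙[a - 1, b + 1]`,
so `∫ g_k ≥ b - a`, the normalised densities `g_k / ∫ g_k` are bounded by `2 / (b - a)`, and
dominated convergence gives `∫ g_k → b - a`, whence `g_k / ∫ g_k → 𝟙[a, b] / (b - a)` pointwise.
-/

open Function Topology

noncomputable def trapezoid (a b k y : ℝ) : ℝ :=
  max 0 (min 1 (min (1 + k * (y - a)) (1 + k * (b - y))))

section Trapezoid

variable {a b k y : ℝ}

theorem continuous_trapezoid : Continuous (trapezoid a b k) := by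
  unfold trapezoid; fun_prop

theorem trapezoid_nonneg : 0 ≤ trapezoid a b k y := le_max_left _ _

theorem trapezoid_le_one : trapezoid a b k y ≤ 1 :=
  max_le zero_le_one (min_le_left _ _)

theorem trapezoid_eq_one (hk : 0 ≤ k) (hy : y ∈ Icc a b) : trapezoid a b k y = 1 := by
  have hL : 0 ≤ k * (y - a) := mul_nonneg hk (sub_nonneg.2 hy.1)
  have hR : 0 ≤ k * (b - y) := mul_nonneg hk (sub_nonneg.2 hy.2)
  rw [trapezoid, min_eq_left (le_min (by linarith) (by linarith)), max_eq_right zero_le_one]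

theorem trapezoid_self_lt_one (hk : 0 < k) (hy : y ≠ a) : trapezoid a a k y < 1 := by
  refine max_lt zero_lt_one ((min_le_right _ _).trans_lt ?_)
  rcases hy.lt_or_gt with h | h
  · exact (min_le_left _ _).trans_lt (by nlinarith)
  · exact (min_le_right _ _).trans_lt (by nlinarith)

theorem monotoneOn_trapezoid (hk : 0 ≤ k) : MonotoneOn (trapezoid a b k) (Iic b) := by
  intro y _ y' hy' hyy'
  have hL : 1 + k * (y - a) ≤ 1 + k * (y' - a) := by gcongr
  have hR : 1 ≤ 1 + k * (b - y') := by nlinarith [mul_nonneg hk (sub_nonneg.2 (mem_Iic.1 hy'))]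
  refine max_le_max le_rfl (le_min (min_le_left _ _) (le_min ?_ ?_))
  · exact (min_le_right _ _).trans ((min_le_left _ _).trans hL)
  · exact (min_le_left _ _).trans hR

theorem antitoneOn_trapezoid (hk : 0 ≤ k) : AntitoneOn (trapezoid a b k) (Ici a) := by
  intro y hy y' _ hyy'
  have hL : 1 ≤ 1 + k * (y - a) := by nlinarith [mul_nonneg hk (sub_nonneg.2 (mem_Ici.1 hy))]
  have hR : 1 + k * (b - y') ≤ 1 + k * (b - y) := by gcongr
  refine max_le_max le_rfl (le_min (min_le_left _ _) (le_min ?_ ?_))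
  · exact (min_le_left _ _).trans hL
  · exact (min_le_right _ _).trans ((min_le_right _ _).trans hR)

theorem support_trapezoid_subset (hk : 0 < k) :
    support (trapezoid a b k) ⊆ Ioo (a - k⁻¹) (b + k⁻¹) := by
  intro y hy
  have hpos : 0 < min (1 + k * (y - a)) (1 + k * (b - y)) := by
    by_contra! h
    exact hy (max_eq_left ((min_le_right _ _).trans h))
  have hL := (lt_min_iff.1 hpos).1
  have hR := (lt_min_iff.1 hpos).2
  constructor
  · rw [sub_lt_comm, inv_eq_one_div, lt_div_iff₀ hk]; linarith
  · rw [← sub_lt_iff_lt_add', inv_eq_one_div, lt_div_iff₀ hk]; linarith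

theorem tendsto_trapezoid :
    Tendsto (fun k => trapezoid a b k y) atTop (𝓝 ((Icc a b).indicator 1 y)) := by
  by_cases hy : y ∈ Icc a b
  · rw [indicator_of_mem hy]
    exact tendsto_const_nhds.congr' <|
      (eventually_ge_atTop 0).mono fun k hk => (trapezoid_eq_one hk hy).symm
  · rw [indicator_of_notMem hy]
    have hδ : 0 < max (a - y) (y - b) := by
      rw [mem_Icc, not_and_or, not_le, not_le] at hy
      rcases hy with h | h
      · exact lt_max_of_lt_left (by linarith)
      · exact lt_max_of_lt_right (by linarith)
    refine tendsto_const_nhds.congr' <|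
      ((eventually_gt_atTop 0).and (tendsto_inv_atTop_zero.eventually (gt_mem_nhds hδ))).mono
        fun k ⟨hk, hkδ⟩ => (notMem_support.1 fun h => ?_).symm
    have := support_trapezoid_subset hk h
    rw [mem_Ioo] at this
    rcases le_max_iff.1 hkδ.le with h' | h' <;> linarith [this.1, this.2]

end Trapezoid

noncomputable def peakedTrapezoid (a b x₁ k y : ℝ) : ℝ :=
  trapezoid a b k y + k⁻¹ * trapezoid x₁ x₁ 1 y

section PeakedTrapezoid

variable {a b x₁ k y : ℝ}

theorem continuous_peakedTrapezoid : Continuous (peakedTrapezoid a b x₁ k) :=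
  continuous_trapezoid.add (continuous_const.mul continuous_trapezoid)

theorem peakedTrapezoid_nonneg (hk : 0 ≤ k) : 0 ≤ peakedTrapezoid a b x₁ k y :=
  add_nonneg trapezoid_nonneg (mul_nonneg (inv_nonneg.2 hk) trapezoid_nonneg)

theorem peakedTrapezoid_le_two (hk : 1 ≤ k) : peakedTrapezoid a b x₁ k y ≤ 2 := by
  unfold peakedTrapezoid
  have : k⁻¹ * trapezoid x₁ x₁ 1 y ≤ 1 :=
    mul_le_one₀ (inv_le_one_of_one_le₀ hk) trapezoid_nonneg trapezoid_le_one
  linarith [trapezoid_le_one (a := a) (b := b) (k := k) (y := y)]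

theorem indicator_le_peakedTrapezoid (hk : 0 ≤ k) :
    (Icc a b).indicator 1 y ≤ peakedTrapezoid a b x₁ k y := by
  by_cases hy : y ∈ Icc a b
  · rw [indicator_of_mem hy, Pi.one_apply, peakedTrapezoid, trapezoid_eq_one hk hy]
    exact le_add_of_nonneg_right (mul_nonneg (inv_nonneg.2 hk) trapezoid_nonneg)
  · rw [indicator_of_notMem hy]
    exact peakedTrapezoid_nonneg hk

theorem support_peakedTrapezoid_subset (hx : x₁ ∈ Icc a b) (hk : 1 ≤ k) :
    support (peakedTrapezoid a b x₁ k) ⊆ Icc (a - 1) (b + 1) := by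
  have hk' : k⁻¹ ≤ 1 := inv_le_one_of_one_le₀ hk
  refine (support_add _ _).trans (union_subset ?_ ?_)
  · refine (support_trapezoid_subset (by linarith)).trans (Ioo_subset_Icc_self.trans ?_)
    exact Icc_subset_Icc (by linarith) (by linarith)
  · refine (support_mul_subset_right _ _).trans ((support_trapezoid_subset one_pos).trans ?_)
    exact Ioo_subset_Icc_self.trans (Icc_subset_Icc (by simp [hx.1]) (by simp [hx.2]))

theorem monotoneOn_peakedTrapezoid (hx : x₁ ≤ b) (hk : 0 ≤ k) :
    MonotoneOn (peakedTrapezoid a b x₁ k) (Iic x₁) :=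
  ((monotoneOn_trapezoid hk).mono (Iic_subset_Iic.2 hx)).add
    ((monotone_mul_left_of_nonneg (inv_nonneg.2 hk)).comp_monotoneOn
      (monotoneOn_trapezoid zero_le_one))

theorem antitoneOn_peakedTrapezoid (hx : a ≤ x₁) (hk : 0 ≤ k) :
    AntitoneOn (peakedTrapezoid a b x₁ k) (Ici x₁) :=
  ((antitoneOn_trapezoid hk).mono (Ici_subset_Ici.2 hx)).add
    ((monotone_mul_left_of_nonneg (inv_nonneg.2 hk)).comp_antitoneOn
      (antitoneOn_trapezoid zero_le_one))

theorem peakedTrapezoid_lt_peak (hx : x₁ ∈ Icc a b) (hk : 0 < k) (hy : y ≠ x₁) :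
    peakedTrapezoid a b x₁ k y < peakedTrapezoid a b x₁ k x₁ := by
  unfold peakedTrapezoid
  rw [trapezoid_eq_one hk.le hx, trapezoid_eq_one zero_le_one ⟨le_rfl, le_rfl⟩]
  exact add_lt_add_of_le_of_lt trapezoid_le_one
    (mul_lt_mul_of_pos_left (trapezoid_self_lt_one one_pos hy) (inv_pos.2 hk))

theorem tendsto_peakedTrapezoid :
    Tendsto (fun k => peakedTrapezoid a b x₁ k y) atTop (𝓝 ((Icc a b).indicator 1 y)) := by
  simpa [peakedTrapezoid] using
    tendsto_trapezoid.add (tendsto_inv_atTop_zero.mul_const (trapezoid x₁ x₁ 1 y))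

theorem integrable_peakedTrapezoid (hx : x₁ ∈ Icc a b) (hk : 1 ≤ k) :
    Integrable (peakedTrapezoid a b x₁ k) :=
  continuous_peakedTrapezoid.integrable_of_hasCompactSupport <|
    .of_support_subset_isCompact isCompact_Icc (support_peakedTrapezoid_subset hx hk)

theorem sub_le_integral_peakedTrapezoid (hab : a ≤ b) (hx : x₁ ∈ Icc a b) (hk : 1 ≤ k) :
    b - a ≤ ∫ y, peakedTrapezoid a b x₁ k y := by
  calc b - a = ∫ y, (Icc a b).indicator 1 y := by
        rw [integral_indicator_one measurableSet_Icc, Real.volume_real_Icc_of_le hab]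
    _ ≤ ∫ y, peakedTrapezoid a b x₁ k y :=
        integral_mono
          ((integrable_indicator_iff measurableSet_Icc).2 (integrableOn_const measure_Icc_lt_top.ne))
          (integrable_peakedTrapezoid hx hk) fun y => indicator_le_peakedTrapezoid (by linarith)

theorem tendsto_integral_peakedTrapezoid (hab : a ≤ b) (hx : x₁ ∈ Icc a b) :
    Tendsto (fun k => ∫ y, peakedTrapezoid a b x₁ k y) atTop (𝓝 (b - a)) := by
  have hbound : ∀ k, 1 ≤ k → ∀ y,
      ‖peakedTrapezoid a b x₁ k y‖ ≤ (Icc (a - 1) (b + 1)).indicator (fun _ => 2) y := by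
    intro k hk y
    rw [← indicator_eq_self.2 (support_peakedTrapezoid_subset hx hk),
      norm_indicator_eq_indicator_norm]
    exact indicator_le_indicator <| by
      rw [Real.norm_of_nonneg (peakedTrapezoid_nonneg (by linarith))]
      exact peakedTrapezoid_le_two hk
  rw [← Real.volume_real_Icc_of_le hab, ← integral_indicator_one measurableSet_Icc]
  refine tendsto_integral_filter_of_dominated_convergence _
    (.of_forall fun k => continuous_peakedTrapezoid.aestronglyMeasurable)
    ((eventually_ge_atTop 1).mono fun k hk => .of_forall (hbound k hk))
    ((integrable_indicator_iff measurableSet_Icc).2 (integrableOn_const measure_Icc_lt_top.ne))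
    (.of_forall fun y => tendsto_peakedTrapezoid)

end PeakedTrapezoid

theorem isUnimodalDensity_inv_integral_mul {g : ℝ → ℝ} {x₀ : ℝ} (hc : Continuous g)
    (hg : ∀ y, 0 ≤ g y) (hI : 0 < ∫ y, g y) (hmono : MonotoneOn g (Iic x₀))
    (hanti : AntitoneOn g (Ici x₀)) (hpeak : ∀ x, x ≠ x₀ → g x < g x₀) :
    IsUnimodalDensity (fun y => (∫ y, g y)⁻¹ * g y) x₀ := by
  have hc₀ : 0 ≤ (∫ y, g y)⁻¹ := inv_nonneg.2 hI.le
  refine ⟨continuous_const.mul hc, fun y => mul_nonneg hc₀ (hg y), ?_,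
    (monotone_mul_left_of_nonneg hc₀).comp_monotoneOn hmono,
    (monotone_mul_left_of_nonneg hc₀).comp_antitoneOn hanti,
    fun x hx => mul_lt_mul_of_pos_left (hpeak x hx) (inv_pos.2 hI)⟩
  rw [integral_const_mul, inv_mul_cancel₀ hI.ne']

/-- Approximation of the uniform density on `[a, b]` by a uniformly bounded
sequence of densities in 𝓕₀ with prescribed mode `x₁ ∈ (a, b)` and supports
contained in a common bounded interval. -/
theorem exists_unimodal_approx_of_uniform (a b x₁ : ℝ) (hab : a < b)
    (hx₁ : x₁ ∈ Set.Ioo a b) :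
    ∃ M : ℝ, 0 < M ∧ ∃ f : ℕ → ℝ → ℝ,
      (∀ n, IsUnimodalDensity (f n) x₁) ∧
      (∀ n y, 0 ≤ f n y ∧ f n y ≤ M) ∧
      (∃ c d : ℝ, ∀ n, Function.support (f n) ⊆ Set.Icc c d) ∧
      (∀ᵐ y : ℝ, Filter.Tendsto (fun n => f n y) Filter.atTop
        (nhds ((b - a)⁻¹ * Set.indicator (Set.Icc a b) (fun _ => (1 : ℝ)) y))) := by
  have hx : x₁ ∈ Icc a b := Ioo_subset_Icc_self hx₁
  have hk : ∀ n : ℕ, 1 ≤ (n : ℝ) + 1 := fun n => le_add_of_nonneg_left n.cast_nonneg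
  have hk_lim : Tendsto (fun n : ℕ => (n : ℝ) + 1) atTop atTop :=
    tendsto_atTop_add_const_right _ 1 tendsto_natCast_atTop_atTop
  set g : ℕ → ℝ → ℝ := fun n => peakedTrapezoid a b x₁ (n + 1)
  have hI : ∀ n, b - a ≤ ∫ y, g n y := fun n => sub_le_integral_peakedTrapezoid hab.le hx (hk n)
  have hI_pos : ∀ n, 0 < ∫ y, g n y := fun n => (sub_pos.2 hab).trans_le (hI n)
  refine ⟨2 / (b - a), div_pos two_pos (sub_pos.2 hab), fun n y => (∫ y, g n y)⁻¹ * g n y,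
    fun n => ?_, fun n y => ?_, ⟨a - 1, b + 1, fun n => ?_⟩, .of_forall fun y => ?_⟩
  · have hk₀ : (0 : ℝ) < n + 1 := n.cast_add_one_pos
    exact isUnimodalDensity_inv_integral_mul continuous_peakedTrapezoid
      (fun y => peakedTrapezoid_nonneg hk₀.le) (hI_pos n) (monotoneOn_peakedTrapezoid hx.2 hk₀.le)
      (antitoneOn_peakedTrapezoid hx.1 hk₀.le) fun y hy => peakedTrapezoid_lt_peak hx hk₀ hy
  · have hg := peakedTrapezoid_nonneg (a := a) (b := b) (x₁ := x₁) (y := y)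
      (zero_le_one.trans (hk n))
    refine ⟨mul_nonneg (inv_nonneg.2 (hI_pos n).le) hg, ?_⟩
    rw [div_eq_inv_mul]
    exact mul_le_mul (inv_anti₀ (sub_pos.2 hab) (hI n)) (peakedTrapezoid_le_two (hk n)) hg
      (inv_nonneg.2 (sub_pos.2 hab).le)
  · exact (support_mul_subset_right _ _).trans (support_peakedTrapezoid_subset hx (hk n))
  · exact (((tendsto_integral_peakedTrapezoid hab.le hx).comp hk_lim).inv₀
      (sub_pos.2 hab).ne').mul (tendsto_peakedTrapezoid.comp hk_lim)
end

section
/- Let 𝓕₁ be the class of continuous, nonnegative probability densities f : ℝ → ℝ with ∫ f(y) dy = 1 that possess a unique global maximizer (called the mode of f); 𝓕₁ contains 𝓕₀. There exists no strictly 𝓕₁-consistent scoring function for the mode; that is, the mode is not elicitable relative to the class of all continuous Lebesgue densities with unique global maximum. -/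
open MeasureTheory Set Filter

/-- `f` belongs to `𝓕₁` with mode `t`: continuous, nonnegative, integrates to 1,
and `t` is the unique global maximizer. -/
def IsF1Density (f : ℝ → ℝ) (t : ℝ) : Prop :=
  Continuous f ∧ (∀ y, 0 ≤ f y) ∧ (∫ y : ℝ, f y) = 1 ∧ ∀ x, x ≠ t → f x < f t

/-- `f` belongs to the class `𝓕₁` of continuous densities with unique global maximum. -/
def MemF1 (f : ℝ → ℝ) : Prop := ∃ t, IsF1Density f t

/-- `s` is a strictly `𝓕₁`-consistent scoring function for the mode. -/
def StrictlyF1Consistent (s : ℝ × ℝ → ℝ) : Prop :=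
  Measurable s ∧
  (∀ x : ℝ, ∀ f : ℝ → ℝ, MemF1 f → Integrable (fun y => |s (x, y)| * f y)) ∧
  (∀ f : ℝ → ℝ, ∀ t : ℝ, IsF1Density f t → ∀ x : ℝ,
    (∫ y : ℝ, s (t, y) * f y) ≤ (∫ y : ℝ, s (x, y) * f y) ∧
    ((∫ y : ℝ, s (t, y) * f y) = (∫ y : ℝ, s (x, y) * f y) → x = t))

open Topology

/-!
The expected score gap `L f = ∫ s (1, y) f y - ∫ s (0, y) f y` is linear in `f`, positive when
`f` has mode `0` and negative when `f` has mode `1`. Put a tent of height about `4` at `0` and a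
thin spike of height `5` at `1`: the mode is `1`, so `L < 0`. As the width of the spike tends to
`0`, its contribution to `L` vanishes by dominated convergence, which leaves `L` of the tent at
`0` alone, and that is positive.
-/

noncomputable def tent (w c y : ℝ) : ℝ := max 0 (1 - |y - c| / w)

lemma tent_nonneg (w c y : ℝ) : 0 ≤ tent w c y := le_max_left _ _

lemma tent_self (w c : ℝ) : tent w c c = 1 := by simp [tent]

lemma tent_le_one {w : ℝ} (hw : 0 < w) (c y : ℝ) : tent w c y ≤ 1 :=
  max_le zero_le_one (by linarith [div_nonneg (abs_nonneg (y - c)) hw.le])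

lemma tent_lt_one {w c y : ℝ} (hw : 0 < w) (hy : y ≠ c) : tent w c y < 1 :=
  max_lt zero_lt_one (by linarith [div_pos (abs_pos.mpr (sub_ne_zero.mpr hy)) hw])

lemma tent_eq_zero {w c y : ℝ} (hw : 0 < w) (h : w ≤ |y - c|) : tent w c y = 0 :=
  max_eq_left (by linarith [(one_le_div hw).mpr h])

lemma tent_mono {w w' : ℝ} (hw : 0 < w) (h : w ≤ w') (c y : ℝ) : tent w c y ≤ tent w' c y :=
  max_le_max le_rfl (by linarith [div_le_div_of_nonneg_left (abs_nonneg (y - c)) hw h])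

@[fun_prop]
lemma continuous_tent (w c : ℝ) : Continuous (tent w c) := by
  unfold tent; fun_prop

lemma integral_tent {w : ℝ} (hw : 0 < w) (c : ℝ) : ∫ y, tent w c y = w := by
  have hsupp : Function.support (tent w 0) ⊆ Ioc (-w) w := fun y hy => by
    by_contra h
    refine hy (tent_eq_zero hw ?_)
    rw [sub_zero, le_abs]
    rcases not_and_or.mp h with h | h <;> [right; left] <;> linarith
  have hleft : ∫ y in -w..0, tent w 0 y = ∫ y in -w..0, (1 + y / w) :=
    intervalIntegral.integral_congr fun y hy => by
      rw [uIcc_of_le (by linarith)] at hy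
      rw [tent, sub_zero, abs_of_nonpos hy.2, max_eq_right] <;>
        [ring; linarith [(div_le_one hw).mpr (neg_le.mp hy.1)]]
  have hright : ∫ y in (0)..w, tent w 0 y = ∫ y in (0)..w, (1 - y / w) :=
    intervalIntegral.integral_congr fun y hy => by
      rw [uIcc_of_le hw.le] at hy
      rw [tent, sub_zero, abs_of_nonneg hy.1, max_eq_right]
      linarith [(div_le_one hw).mpr hy.2]
  calc ∫ y, tent w c y = ∫ y, tent w 0 (y - c) := by simp only [tent, sub_zero]
    _ = ∫ y, tent w 0 y := integral_sub_right_eq_self (fun y => tent w 0 y) c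
    _ = ∫ y in -w..w, tent w 0 y :=
      (intervalIntegral.integral_eq_integral_of_support_subset hsupp).symm
    _ = (∫ y in -w..0, tent w 0 y) + ∫ y in (0)..w, tent w 0 y :=
      (intervalIntegral.integral_add_adjacent_intervals
        ((continuous_tent w 0).intervalIntegrable _ _)
        ((continuous_tent w 0).intervalIntegrable _ _)).symm
    _ = w := by
      rw [hleft, hright]
      simp only [intervalIntegral.intervalIntegrable_id.div_const, intervalIntegrable_const,
        intervalIntegral.integral_add, intervalIntegral.integral_sub,
        intervalIntegral.integral_const, intervalIntegral.integral_div, integral_id]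
      field

lemma integrable_tent {w : ℝ} (hw : 0 < w) (c : ℝ) : Integrable (tent w c) :=
  .of_integral_ne_zero (by rw [integral_tent hw]; exact hw.ne')

lemma tent_eq_zero_of_separated {a b c c' y : ℝ} (hb : 0 < b) (hsep : a + b ≤ |c' - c|)
    (hy : |y - c| < a) : tent b c' y = 0 :=
  tent_eq_zero hb (by linarith [abs_sub_le c' y c, abs_sub_comm c' y])

lemma isF1Density_two_tent {α β a b c c' : ℝ} (ha : 0 < a) (hb : 0 < b)
    (hsep : a + b ≤ |c' - c|) (hβ : 0 ≤ β) (hβα : β < α) (hmass : α * a + β * b = 1) :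
    IsF1Density (fun y => α * tent a c y + β * tent b c' y) c := by
  have hα : 0 < α := hβ.trans_lt hβα
  refine ⟨by fun_prop, fun y => ?_, ?_, fun y hy => ?_⟩
  · have := tent_nonneg a c y
    have := tent_nonneg b c' y
    positivity
  · rw [integral_add ((integrable_tent ha c).const_mul _) ((integrable_tent hb c').const_mul _),
      integral_const_mul, integral_const_mul, integral_tent ha, integral_tent hb, hmass]
  · dsimp only
    rw [tent_self, tent_eq_zero_of_separated (y := c) hb hsep (by simpa using ha)]
    rcases lt_or_ge |y - c| a with hya | hya
    · rw [tent_eq_zero_of_separated hb hsep hya]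
      nlinarith [tent_lt_one ha hy]
    · rw [tent_eq_zero ha hya]
      nlinarith [tent_le_one hb c' y]

lemma tendsto_integral_mul_tent_nhdsGT_zero {ψ : ℝ → ℝ} (hψ : AEStronglyMeasurable ψ)
    {w₀ : ℝ} (hw₀ : 0 < w₀) (c : ℝ) (hint : Integrable fun y => ψ y * tent w₀ c y) :
    Tendsto (fun w => ∫ y, ψ y * tent w c y) (𝓝[>] 0) (𝓝 0) := by
  have hbound : ∀ᶠ w in 𝓝[>] (0 : ℝ), ∀ᵐ y, ‖ψ y * tent w c y‖ ≤ ‖ψ y * tent w₀ c y‖ := by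
    filter_upwards [Ioc_mem_nhdsGT hw₀] with w hw
    refine ae_of_all _ fun y => ?_
    simp only [norm_mul, Real.norm_of_nonneg (tent_nonneg _ c y)]
    exact mul_le_mul_of_nonneg_left (tent_mono hw.1 hw.2 c y) (norm_nonneg _)
  have hlim : ∀ᵐ y, Tendsto (fun w => ψ y * tent w c y) (𝓝[>] 0) (𝓝 0) := by
    filter_upwards [Measure.ae_ne volume c] with y hy
    refine tendsto_const_nhds.congr' ?_
    filter_upwards [Ioo_mem_nhdsGT (abs_pos.mpr (sub_ne_zero.mpr hy))] with w hw
    rw [tent_eq_zero hw.1 hw.2.le, mul_zero]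
  simpa using tendsto_integral_filter_of_dominated_convergence _
    (Eventually.of_forall fun w => hψ.mul (continuous_tent w c).aestronglyMeasurable)
    hbound hint.norm hlim

lemma integral_mul_add_mul {ψ u v : ℝ → ℝ} (hu : Integrable fun y => ψ y * u y)
    (hv : Integrable fun y => ψ y * v y) (α β : ℝ) :
    ∫ y, ψ y * (α * u y + β * v y) = α * (∫ y, ψ y * u y) + β * ∫ y, ψ y * v y := by
  simp_rw [mul_add, mul_left_comm (ψ _)]
  rw [integral_add (hu.const_mul α) (hv.const_mul β), integral_const_mul, integral_const_mul]

lemma isF1Density_tent : IsF1Density (fun y => 4 * tent (1 / 4) 0 y) 0 := by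
  simpa using isF1Density_two_tent (β := 0) (b := 1 / 4) (c' := 1) (by norm_num) (by norm_num)
    (by norm_num) le_rfl (by norm_num) (by norm_num)

lemma isF1Density_spike {w : ℝ} (hw : w ∈ Ioo 0 (1 / 5)) :
    IsF1Density (fun y => 5 * tent w 1 y + 4 * (1 - 5 * w) * tent (1 / 4) 0 y) 1 :=
  isF1Density_two_tent hw.1 (by norm_num) (by norm_num; linarith [hw.2])
    (by linarith [hw.2]) (by linarith [hw.1]) (by ring)

lemma IsUnimodalDensity.isF1Density {f : ℝ → ℝ} {x₀ : ℝ} (h : IsUnimodalDensity f x₀) :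
    IsF1Density f x₀ :=
  ⟨h.1, h.2.1, h.2.2.1, h.2.2.2.2.2⟩

noncomputable def scoreGap (s : ℝ × ℝ → ℝ) (φ : ℝ → ℝ) : ℝ :=
  (∫ y, s (1, y) * φ y) - ∫ y, s (0, y) * φ y

lemma scoreGap_add {s : ℝ × ℝ → ℝ} {u v : ℝ → ℝ} (hu : ∀ x, Integrable fun y => s (x, y) * u y)
    (hv : ∀ x, Integrable fun y => s (x, y) * v y) (α β : ℝ) :
    scoreGap s (fun y => α * u y + β * v y) = α * scoreGap s u + β * scoreGap s v := by
  simp only [scoreGap, integral_mul_add_mul (hu _) (hv _)]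
  ring

lemma scoreGap_const_mul (s : ℝ × ℝ → ℝ) (c : ℝ) (φ : ℝ → ℝ) :
    scoreGap s (fun y => c * φ y) = c * scoreGap s φ := by
  simp only [scoreGap, mul_left_comm _ c, integral_const_mul]
  ring

namespace StrictlyF1Consistent

variable {s : ℝ × ℝ → ℝ} (hs : StrictlyF1Consistent s)
include hs

lemma integrable_mul (x : ℝ) {f φ : ℝ → ℝ} (hf : MemF1 f) (hφ : Continuous φ) {C : ℝ}
    (hle : ∀ y, |φ y| ≤ C * f y) : Integrable fun y => s (x, y) * φ y := by
  refine ((hs.2.1 x f hf).const_mul C).mono'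
    ((hs.1.comp measurable_prodMk_left).mul hφ.measurable).aestronglyMeasurable
    (ae_of_all _ fun y => ?_)
  calc ‖s (x, y) * φ y‖ = |s (x, y)| * |φ y| := by rw [Real.norm_eq_abs, abs_mul]
    _ ≤ |s (x, y)| * (C * f y) := mul_le_mul_of_nonneg_left (hle y) (abs_nonneg _)
    _ = C * (|s (x, y)| * f y) := by ring

lemma integral_lt {f : ℝ → ℝ} {t x : ℝ} (hf : IsF1Density f t) (hx : x ≠ t) :
    ∫ y, s (t, y) * f y < ∫ y, s (x, y) * f y :=
  (hs.2.2 f t hf x).1.lt_of_ne fun h => hx ((hs.2.2 f t hf x).2 h)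

lemma scoreGap_pos {f : ℝ → ℝ} (hf : IsF1Density f 0) : 0 < scoreGap s f :=
  sub_pos.mpr (hs.integral_lt hf one_ne_zero)

lemma scoreGap_neg {f : ℝ → ℝ} (hf : IsF1Density f 1) : scoreGap s f < 0 :=
  sub_neg.mpr (hs.integral_lt hf zero_ne_one)

lemma integrable_mul_tent_quarter (x : ℝ) : Integrable fun y => s (x, y) * tent (1 / 4) 0 y :=
  hs.integrable_mul x ⟨0, isF1Density_tent⟩ (continuous_tent _ _) (C := 1 / 4) fun y => by
    rw [abs_of_nonneg (tent_nonneg _ _ _)]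
    linarith

lemma integrable_mul_tent_spike {w : ℝ} (hw : w ∈ Ioo 0 (1 / 5)) (x : ℝ) :
    Integrable fun y => s (x, y) * tent w 1 y :=
  hs.integrable_mul x ⟨1, isF1Density_spike hw⟩ (continuous_tent _ _) (C := 1 / 5) fun y => by
    rw [abs_of_nonneg (tent_nonneg _ _ _)]
    nlinarith [tent_nonneg (1 / 4) 0 y, hw.2]

lemma tendsto_scoreGap_spike : Tendsto (fun w => scoreGap s (tent w 1)) (𝓝[>] 0) (𝓝 0) := by
  have hI : ∀ x, Tendsto (fun w => ∫ y, s (x, y) * tent w 1 y) (𝓝[>] 0) (𝓝 0) := fun x =>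
    tendsto_integral_mul_tent_nhdsGT_zero (hs.1.comp measurable_prodMk_left).aestronglyMeasurable
      (by norm_num : (0 : ℝ) < 1 / 10) 1 (hs.integrable_mul_tent_spike (by norm_num) x)
  simpa only [scoreGap, sub_zero] using (hI 1).sub (hI 0)

end StrictlyF1Consistent

theorem not_strictlyF1Consistent (s : ℝ × ℝ → ℝ) : ¬ StrictlyF1Consistent s := by
  intro hs
  have hpos : 0 < scoreGap s (tent (1 / 4) 0) := by
    have := hs.scoreGap_pos isF1Density_tent
    rw [scoreGap_const_mul] at this
    linarith
  have hneg : ∀ w ∈ Ioo (0 : ℝ) (1 / 5),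
      5 * scoreGap s (tent w 1) + 4 * (1 - 5 * w) * scoreGap s (tent (1 / 4) 0) < 0 :=
    fun w hw => scoreGap_add (hs.integrable_mul_tent_spike hw) hs.integrable_mul_tent_quarter
      5 (4 * (1 - 5 * w)) ▸ hs.scoreGap_neg (isF1Density_spike hw)
  have hlim : Tendsto
      (fun w => 5 * scoreGap s (tent w 1) + 4 * (1 - 5 * w) * scoreGap s (tent (1 / 4) 0))
      (𝓝[>] 0) (𝓝 (5 * 0 + 4 * (1 - 5 * 0) * scoreGap s (tent (1 / 4) 0))) := by
    have hcont : Continuous fun w : ℝ => 4 * (1 - 5 * w) * scoreGap s (tent (1 / 4) 0) := by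
      fun_prop
    exact (hs.tendsto_scoreGap_spike.const_mul 5).add
      ((hcont.tendsto 0).mono_left nhdsWithin_le_nhds)
  have := le_of_tendsto hlim <| by
    filter_upwards [Ioo_mem_nhdsGT (by norm_num : (0 : ℝ) < 1 / 5)] with w hw using (hneg w hw).le
  linarith

/-- 𝓕₁ contains 𝓕₀, and the mode is not elicitable relative to 𝓕₁. -/
theorem mode_not_elicitable_F1 :
    (∀ f : ℝ → ℝ, MemF0 f → MemF1 f) ∧
    ¬ ∃ s : ℝ × ℝ → ℝ, StrictlyF1Consistent s :=
  ⟨fun _ ⟨x₀, hf⟩ => ⟨x₀, hf.isF1Density⟩, fun ⟨s, hs⟩ => not_strictlyF1Consistent s hs⟩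
end
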